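/- arXiv:2603.08559 — 2 statements merged into one kernel-verified Lean document; each statement's English description precedes it below -/
import Mathlib

section
/- Let t ∈ ((√5−1)/2, 1) and r = (1−t²)/2. There is no straight line in ℝ² that intersects all three closed disks of radius r centered at (t,0), (−t,0), and (0,−t). -/
/-!
A line meeting the three disks passes within distance `r` of each centre, so the centres lie in a
strip of width `2r`. The triangle with vertices `t`, `-t`, `-t i` is right isosceles with
hypotenuse `2t`, so its minimal width is its altitude onto the hypotenuse, namely `t`. Hence
`t ≤ 2r = 1 - t²`, i.e. `t² + t ≤ 1`, which fails exactly when `t > (√5 - 1) / 2`.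
-/

open Complex Metric

lemma sq_affine_le_of_mem_closedBall {a b c r : ℝ} {z p : ℂ} (hz : a * z.re + b * z.im = c)
    (hzp : z ∈ closedBall p r) :
    (a * p.re + b * p.im - c) ^ 2 ≤ r ^ 2 * (a ^ 2 + b ^ 2) := by
  have hdist : (p.re - z.re) ^ 2 + (p.im - z.im) ^ 2 ≤ r ^ 2 := by
    rw [mem_closedBall, dist_comm, dist_eq] at hzp
    have := pow_le_pow_left₀ (norm_nonneg _) hzp 2
    rwa [Complex.sq_norm, normSq_apply, sub_re, sub_im, ← sq, ← sq] at this
  have lagrange : (a * p.re + b * p.im - c) ^ 2 + (a * (p.im - z.im) - b * (p.re - z.re)) ^ 2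
      = (a ^ 2 + b ^ 2) * ((p.re - z.re) ^ 2 + (p.im - z.im) ^ 2) := by
    rw [← hz]; ring
  nlinarith [sq_nonneg (a * (p.im - z.im) - b * (p.re - z.re)),
    mul_le_mul_of_nonneg_left hdist (by positivity : (0 : ℝ) ≤ a ^ 2 + b ^ 2)]

lemma sq_mul_add_sq_le_of_vertices {a b c t M : ℝ} (h₁ : (a * t - c) ^ 2 ≤ M)
    (h₂ : (-(a * t) - c) ^ 2 ≤ M) (h₃ : (-(b * t) - c) ^ 2 ≤ M) :
    t ^ 2 * (a ^ 2 + b ^ 2) ≤ 4 * M := by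
  -- With `u, v, w` the three bases, `4 t² (a² + b²) = (u - v)² + (u + v - 2w)²`; the hints
  -- bound the cross terms `4uw` and `-4vw` by `2(u² + w²)` and `2(v² + w²)`.
  nlinarith [sq_nonneg (a * t - c - (b * t + c)), sq_nonneg (a * t + c + (b * t + c))]

theorem stmt_3 (t r : ℝ) (ht : t ∈ Set.Ioo ((Real.sqrt 5 - 1) / 2) 1)
    (hr : r = (1 - t^2) / 2) :
    ¬ ∃ a b c : ℝ, (a ≠ 0 ∨ b ≠ 0) ∧
      (∃ z : ℂ, a * z.re + b * z.im = c ∧ z ∈ Metric.closedBall (t : ℂ) r) ∧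
      (∃ z : ℂ, a * z.re + b * z.im = c ∧ z ∈ Metric.closedBall (-t : ℂ) r) ∧
      (∃ z : ℂ, a * z.re + b * z.im = c ∧ z ∈ Metric.closedBall (-(t : ℂ) * Complex.I) r) := by
  obtain ⟨hlow, hup⟩ := ht
  have hgolden : 1 < t ^ 2 + t := by
    nlinarith [Real.sq_sqrt (show (0 : ℝ) ≤ 5 by norm_num), Real.sqrt_nonneg 5]
  have hr0 : 0 ≤ 2 * r := by rw [hr]; nlinarith [Real.sqrt_nonneg 5]
  rintro ⟨a, b, c, hab, ⟨z₁, hz₁, hb₁⟩, ⟨z₂, hz₂, hb₂⟩, ⟨z₃, hz₃, hb₃⟩⟩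
  have h₁ := sq_affine_le_of_mem_closedBall hz₁ hb₁
  have h₂ := sq_affine_le_of_mem_closedBall hz₂ hb₂
  have h₃ := sq_affine_le_of_mem_closedBall hz₃ hb₃
  simp only [ofReal_re, ofReal_im, mul_zero, add_zero, neg_re, mul_neg, neg_im, neg_zero, neg_mul,
    mul_re, I_re, I_im, mul_one, sub_self, mul_im, zero_add] at h₁ h₂ h₃
  have hwidth : t ^ 2 * (a ^ 2 + b ^ 2) ≤ (2 * r) ^ 2 * (a ^ 2 + b ^ 2) := by
    linarith [sq_mul_add_sq_le_of_vertices h₁ h₂ h₃]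
  have hS : 0 < a ^ 2 + b ^ 2 := by rcases hab with h | h <;> positivity
  have ht_le : t ≤ 2 * r :=
    (pow_le_pow_iff_left₀ (by linarith) hr0 two_ne_zero).mp (le_of_mul_le_mul_right hwidth hS)
  linarith
end

section
/- Let F be a rational function on ℂ² (written as a quotient of two polynomials with no common factors) that is holomorphic on a neighborhood of a point (w₁, γ) with γ on the unit circle. Suppose for each τ on the unit circle near γ, the function z₁ ↦ F(z₁, τ) is constant on a neighborhood of w₁. Then ∂F/∂z₁ is identically zero on the domain of F; i.e., F depends only on z₂. -/
/-!
Write `W = ∂₁P · Q - P · ∂₁Q`, so that `∂F/∂z₁ = W / Q²` wherever `Q ≠ 0`; it suffices to show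
that the polynomial `W` vanishes. For `τ ∈ 𝕋` near `γ` with `Q(w₁, τ) ≠ 0`, the slice
`F(·, τ)` is constant near `w₁`, so the one-variable polynomial `W(·, τ)` vanishes on a
neighbourhood of `w₁` and hence everywhere. Such `τ` form a relatively open arc of `𝕋` around `γ`,
which is infinite, and a polynomial in two variables vanishing on `ℂ × (infinite set)` is zero.
-/

open Polynomial Filter Topology

namespace MvPolynomial

section Slice

variable {R : Type*} [CommSemiring R]

noncomputable def sliceFst (c : R) : MvPolynomial (Fin 2) R →ₐ[R] R[X] :=
  aeval ![Polynomial.X, Polynomial.C c]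

@[simp]
lemma eval_sliceFst (c x : R) (p : MvPolynomial (Fin 2) R) :
    (sliceFst c p).eval x = eval ![x, c] p := by
  rw [sliceFst, aeval_def, polynomial_eval_eval₂]
  congr 1
  · ext; simp
  · ext i; fin_cases i <;> simp

lemma derivative_sliceFst (c : R) (p : MvPolynomial (Fin 2) R) :
    derivative (sliceFst c p) = sliceFst c (pderiv 0 p) := by
  induction p using MvPolynomial.induction_on with
  | C a => simp [sliceFst]
  | add p q hp hq => simp [hp, hq]
  | mul_X p i hp =>
    rw [map_mul, derivative_mul, hp, Derivation.leibniz, map_add, smul_eq_mul, smul_eq_mul,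
      map_mul, map_mul]
    fin_cases i <;> simp [sliceFst] <;> ring

end Slice

lemma eq_zero_of_eval_eq_zero_of_infinite {R : Type*} [CommRing R] [IsDomain R] [Infinite R]
    {p : MvPolynomial (Fin 2) R} {T : Set R} (hT : T.Infinite)
    (h : ∀ x, ∀ c ∈ T, eval ![x, c] p = 0) : p = 0 := by
  refine funext_set ![Set.univ, T] (fun i ↦ ?_) fun x hx ↦ ?_
  · fin_cases i
    exacts [Set.infinite_univ, hT]
  · have hx_eq : x = ![x 0, x 1] := by ext i; fin_cases i <;> rfl
    rw [map_zero, hx_eq]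
    exact h _ _ (hx 1 trivial)

section Analysis

variable {𝕜 : Type*} [NontriviallyNormedField 𝕜]

lemma eval_fst_eq_zero_of_eventually_eq_zero {p : MvPolynomial (Fin 2) 𝕜} {c w : 𝕜}
    (h : ∀ᶠ y in 𝓝 w, eval ![y, c] p = 0) (x : 𝕜) : eval ![x, c] p = 0 := by
  suffices sliceFst c p = 0 by simpa using congr_arg (Polynomial.eval x) this
  exact eq_zero_of_infinite_isRoot _ ((infinite_of_mem_nhds w h).mono fun y hy ↦ by simpa)

lemma hasDerivAt_eval_fst (p : MvPolynomial (Fin 2) 𝕜) (x c : 𝕜) :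
    HasDerivAt (fun y ↦ eval ![y, c] p) (eval ![x, c] (pderiv 0 p)) x := by
  simpa [derivative_sliceFst] using (sliceFst c p).hasDerivAt x

lemma deriv_eval_div_eval_fst {P Q : MvPolynomial (Fin 2) 𝕜} {x c : 𝕜}
    (hQ : eval ![x, c] Q ≠ 0) :
    deriv (fun y ↦ eval ![y, c] P / eval ![y, c] Q) x =
      eval ![x, c] (pderiv 0 P * Q - P * pderiv 0 Q) / eval ![x, c] Q ^ 2 :=
  ((hasDerivAt_eval_fst P x c).div (hasDerivAt_eval_fst Q x c) hQ).deriv.trans (by simp)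

lemma eval_fst_pderiv_mul_sub_eq_zero_of_eventually_const {P Q : MvPolynomial (Fin 2) 𝕜}
    {w c : 𝕜} (hQ : eval ![w, c] Q ≠ 0)
    (hconst : (fun y ↦ eval ![y, c] P / eval ![y, c] Q) =ᶠ[𝓝 w]
      fun _ ↦ eval ![w, c] P / eval ![w, c] Q)
    (x : 𝕜) : eval ![x, c] (pderiv 0 P * Q - P * pderiv 0 Q) = 0 := by
  have hQ_near : ∀ᶠ y in 𝓝 w, eval ![y, c] Q ≠ 0 :=
    ((continuous_eval Q).comp (by fun_prop : Continuous fun y : 𝕜 ↦ ![y, c])).continuousAt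
      |>.eventually_ne hQ
  refine eval_fst_eq_zero_of_eventually_eq_zero (w := w) ?_ x
  filter_upwards [hconst.deriv, hQ_near] with y hy hyQ
  rw [deriv_eval_div_eval_fst hyQ, deriv_const] at hy
  simpa [hyQ] using hy

end Analysis

end MvPolynomial

lemma Complex.infinite_setOf_norm_eq_one_of_mem_nhds {γ : ℂ} (hγ : ‖γ‖ = 1) {s : Set ℂ}
    (hs : s ∈ 𝓝 γ) : {τ ∈ s | ‖τ‖ = 1}.Infinite := by
  have : Nontrivial Circle := ⟨1, Circle.exp Real.pi, Circle.exp_pi_ne_one.symm⟩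
  let u : Circle := ⟨γ, mem_sphere_zero_iff_norm.2 hγ⟩
  have hu : (↑) ⁻¹' s ∈ 𝓝 u := continuous_subtype_val.continuousAt.preimage_mem_nhds hs
  refine ((infinite_of_mem_nhds u hu).image Subtype.val_injective.injOn).mono ?_
  rintro _ ⟨v, hv, rfl⟩
  exact ⟨hv, Circle.norm_coe v⟩

open MvPolynomial

theorem stmt_11_general (P Q : MvPolynomial (Fin 2) ℂ)
    (F : ℂ → ℂ → ℂ)
    (hF : ∀ z₁ z₂ : ℂ, F z₁ z₂ =
      MvPolynomial.eval ![z₁, z₂] P / MvPolynomial.eval ![z₁, z₂] Q)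
    (w₁ γ : ℂ) (hγ : ‖γ‖ = 1) (hQ : MvPolynomial.eval ![w₁, γ] Q ≠ 0)
    (hconst : ∃ ε > (0:ℝ), ∀ τ : ℂ, ‖τ‖ = 1 → ‖τ - γ‖ < ε →
      ∃ δ > (0:ℝ), ∀ z₁ : ℂ, ‖z₁ - w₁‖ < δ → F z₁ τ = F w₁ τ) :
    ∀ z₁ z₂ : ℂ, MvPolynomial.eval ![z₁, z₂] Q ≠ 0 →
      deriv (fun w => F w z₂) z₁ = 0 := by
  obtain rfl : F = fun z₁ z₂ ↦ eval ![z₁, z₂] P / eval ![z₁, z₂] Q := funext₂ hF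
  suffices hW : pderiv 0 P * Q - P * pderiv 0 Q = 0 by
    intro z₁ z₂ hq
    rw [deriv_eval_div_eval_fst hq, hW, map_zero, zero_div]
  obtain ⟨ε, hε, hconst⟩ := hconst
  have hQ_near : ∀ᶠ τ in 𝓝 γ, eval ![w₁, τ] Q ≠ 0 :=
    ((continuous_eval Q).comp (by fun_prop : Continuous fun τ : ℂ ↦ ![w₁, τ])).continuousAt
      |>.eventually_ne hQ
  refine eq_zero_of_eval_eq_zero_of_infinite (Complex.infinite_setOf_norm_eq_one_of_mem_nhds hγ
    (inter_mem (Metric.ball_mem_nhds γ hε) hQ_near)) ?_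
  rintro x τ ⟨⟨hτγ, hτQ⟩, hτ⟩
  obtain ⟨δ, hδ, hδconst⟩ := hconst τ hτ (by simpa [dist_eq_norm] using hτγ)
  refine eval_fst_pderiv_mul_sub_eq_zero_of_eventually_const hτQ ?_ x
  filter_upwards [Metric.ball_mem_nhds w₁ hδ] with y hy
  exact hδconst y (by simpa [dist_eq_norm] using hy)

/-- A rational function `F = P/Q` (coprime) on `ℂ²`, holomorphic near a point `(w₁, γ)` with
`γ ∈ 𝕋`, which is constant in `z₁` near `w₁` on slices `z₂ = τ` for all `τ ∈ 𝕋` near `γ`,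
has `∂F/∂z₁ ≡ 0` on all of its domain `{Q ≠ 0}`. -/
theorem stmt_11 (P Q : MvPolynomial (Fin 2) ℂ) (hco : IsCoprime P Q)
    (F : ℂ → ℂ → ℂ)
    (hF : ∀ z₁ z₂ : ℂ, F z₁ z₂ =
      MvPolynomial.eval ![z₁, z₂] P / MvPolynomial.eval ![z₁, z₂] Q)
    (w₁ γ : ℂ) (hγ : ‖γ‖ = 1) (hQ : MvPolynomial.eval ![w₁, γ] Q ≠ 0)
    (hconst : ∃ ε > (0:ℝ), ∀ τ : ℂ, ‖τ‖ = 1 → ‖τ - γ‖ < ε →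
      ∃ δ > (0:ℝ), ∀ z₁ : ℂ, ‖z₁ - w₁‖ < δ → F z₁ τ = F w₁ τ) :
    ∀ z₁ z₂ : ℂ, MvPolynomial.eval ![z₁, z₂] Q ≠ 0 →
      deriv (fun w => F w z₂) z₁ = 0 :=
  stmt_11_general P Q F hF w₁ γ hγ hQ hconst
end
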